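/- arXiv:2006.15396 — 2 statements merged into one kernel-verified Lean document; each statement's English description precedes it below -/
import Mathlib

section
/- Let (Ω, F, P) be a probability space, and for each N let {V_{N,j}}_{1≤j≤M_N} be a triangular array of real random variables and F^N a sub-σ-field of F such that: (1) the V_{N,j} are conditionally independent given F^N and E[|V_{N,j}| | F^N] < ∞ for all N, j; (2) the sequence Σ_{j=1}^{M_N} E[|V_{N,j}| | F^N] is bounded in probability; (3) for every ε > 0, Σ_{j=1}^{M_N} E[|V_{N,j}| 1(|V_{N,j}| ≥ ε) | F^N] → 0 in probability as N → ∞. Then Σ_{j=1}^{M_N} (V_{N,j} − E[V_{N,j} | F^N]) → 0 in probability as N → ∞. -/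
/-!
Truncate each variable at a small level `η`, writing `V = (V - W) + W` with `|W| ≤ η`.
The conditional L¹ mass of the large parts `V - W` is at most the Lindeberg sum, which tends to
zero in probability, so a conditional Markov inequality disposes of them and of their conditional
means. The truncated parts stay conditionally pairwise independent, so the conditional second
moment of their centred sum is the sum of the conditional variances, each at most
`η * E[|V| | 𝔉]`. On the event where the row sum of the `E[|V| | 𝔉]` is at most `K` (whose
complement is small by boundedness in probability), a conditional Chebyshev inequality bounds
the deviation probability by a multiple of `η K`, which is small for `η` small.
-/

open MeasureTheory ProbabilityTheory Filter Finset

namespace ProbabilityTheory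

variable {Ω : Type*} {m mΩ : MeasurableSpace Ω} {μ : Measure Ω}

lemma indepFun_of_measure_preimage_Iic_rat {ν : Measure Ω} [IsZeroOrProbabilityMeasure ν]
    {f g : Ω → ℝ} (hf : Measurable f) (hg : Measurable g)
    (h : ∀ q r : ℚ, ν (f ⁻¹' Set.Iic (q : ℝ) ∩ g ⁻¹' Set.Iic (r : ℝ))
      = ν (f ⁻¹' Set.Iic (q : ℝ)) * ν (g ⁻¹' Set.Iic (r : ℝ))) :
    IndepFun f g ν := by
  have hcomap : ∀ φ : Ω → ℝ, MeasurableSpace.comap φ inferInstance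
      = MeasurableSpace.generateFrom (Set.preimage φ '' ⋃ q : ℚ, {Set.Iic (q : ℝ)}) := by
    intro φ
    rw [← MeasurableSpace.comap_generateFrom, ← Real.borel_eq_generateFrom_Iic_rat,
      ← BorelSpace.measurable_eq]
  rw [IndepFun_iff_Indep]
  refine IndepSets.indep hf.comap_le hg.comap_le (Real.isPiSystem_Iic_rat.comap f)
    (Real.isPiSystem_Iic_rat.comap g) (hcomap f) (hcomap g) ?_
  rw [IndepSets_iff]
  rintro _ _ ⟨_, hs, rfl⟩ ⟨_, ht, rfl⟩
  simp only [Set.mem_iUnion, Set.mem_singleton_iff] at hs ht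
  obtain ⟨q, rfl⟩ := hs
  obtain ⟨r, rfl⟩ := ht
  exact h q r

lemma CondIndepFun.ae_indepFun_condExpKernel [StandardBorelSpace Ω] [IsFiniteMeasure μ]
    (hm : m ≤ mΩ) {f g : Ω → ℝ} (hf : Measurable f) (hg : Measurable g)
    (h : CondIndepFun m hm f g μ) :
    ∀ᵐ ω ∂μ, IndepFun f g (condExpKernel μ m ω) := by
  have hprod := Kernel.indepFun_iff_measure_inter_preimage_eq_mul.mp h
  -- only countably many product identities are needed, so they hold together for a.e. `ω`
  refine ae_of_ae_trim hm ?_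
  filter_upwards [ae_all_iff.2 fun q : ℚ => ae_all_iff.2 fun r : ℚ =>
    hprod _ _ (measurableSet_Iic (a := (q : ℝ))) (measurableSet_Iic (a := (r : ℝ)))]
    with ω hω
  exact indepFun_of_measure_preimage_Iic_rat hf hg hω

lemma CondIndepFun.condExp_mul_ae_eq [StandardBorelSpace Ω] [IsFiniteMeasure μ]
    (hm : m ≤ mΩ) {f g : Ω → ℝ} (hf : Measurable f) (hg : Measurable g)
    (hfi : Integrable f μ) (hgi : Integrable g μ) (hfgi : Integrable (f * g) μ)
    (h : CondIndepFun m hm f g μ) :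
    μ[f * g | m] =ᵐ[μ] μ[f | m] * μ[g | m] := by
  filter_upwards [condExp_ae_eq_integral_condExpKernel hm hfgi,
    condExp_ae_eq_integral_condExpKernel hm hfi, condExp_ae_eq_integral_condExpKernel hm hgi,
    h.ae_indepFun_condExpKernel hm hf hg] with ω hfg hf' hg' hind
  rw [hfg, Pi.mul_apply, hf', hg']
  exact hind.integral_mul_eq_mul_integral hf.aestronglyMeasurable hg.aestronglyMeasurable

lemma CondIndepFun.condExp_mul_sub_condExp_ae_eq_zero [StandardBorelSpace Ω]
    [IsFiniteMeasure μ] (hm : m ≤ mΩ) {f g : Ω → ℝ} (hf : Measurable f) (hg : Measurable g)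
    {c : ℝ} (hfc : ∀ᵐ ω ∂μ, |f ω| ≤ c) (hgc : ∀ᵐ ω ∂μ, |g ω| ≤ c)
    (h : CondIndepFun m hm f g μ) :
    μ[(f - μ[f | m]) * (g - μ[g | m]) | m] =ᵐ[μ] 0 := by
  set F := μ[f | m]
  set G := μ[g | m]
  have hFc : ∀ᵐ ω ∂μ, ‖F ω‖ ≤ c := ae_bdd_abs_condExp_of_ae_bdd_abs hfc
  have hGc : ∀ᵐ ω ∂μ, ‖G ω‖ ≤ c := ae_bdd_abs_condExp_of_ae_bdd_abs hgc
  have hfi : Integrable f μ := .of_bound hf.aestronglyMeasurable c hfc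
  have hgi : Integrable g μ := .of_bound hg.aestronglyMeasurable c hgc
  have hfg : Integrable (f * g) μ := hgi.bdd_mul hf.aestronglyMeasurable hfc
  have hFg : Integrable (F * g) μ := hgi.bdd_mul integrable_condExp.1 hFc
  have hfG : Integrable (f * G) μ := hfi.mul_bdd integrable_condExp.1 hGc
  have hFG : Integrable (F * G) μ := integrable_condExp.mul_bdd integrable_condExp.1 hGc
  have hF : StronglyMeasurable[m] F := stronglyMeasurable_condExp
  have hG : StronglyMeasurable[m] G := stronglyMeasurable_condExp
  have hexpand : (f - F) * (g - G) = f * g - F * g - (f * G - F * G) := by ring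
  rw [hexpand]
  filter_upwards [condExp_sub (hfg.sub hFg) (hfG.sub hFG) m, condExp_sub hfg hFg m,
    condExp_sub hfG hFG m, h.condExp_mul_ae_eq hm hf hg hfi hgi hfg,
    condExp_mul_of_stronglyMeasurable_left hF hFg hgi,
    condExp_mul_of_stronglyMeasurable_right hG hfG hfi] with ω h₁ h₂ h₃ h₄ h₅ h₆
  rw [h₁, Pi.sub_apply, h₂, h₃, Pi.sub_apply, Pi.sub_apply, h₄, h₅, h₆,
    condExp_of_stronglyMeasurable hm (hF.mul hG) hFG]
  simp [F, G]

lemma condExp_sq_sum_ae_eq_sum_condExp_sq {ι : Type*} {s : Finset ι}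
    {X : ι → Ω → ℝ} (hint : ∀ i ∈ s, ∀ j ∈ s, Integrable (X i * X j) μ)
    (horth : ∀ i ∈ s, ∀ j ∈ s, i ≠ j → μ[X i * X j | m] =ᵐ[μ] 0) :
    μ[(∑ i ∈ s, X i) ^ 2 | m] =ᵐ[μ] ∑ i ∈ s, μ[X i ^ 2 | m] := by
  have hdiag : ∀ i ∈ s, μ[∑ j ∈ s, X i * X j | m] =ᵐ[μ] μ[X i ^ 2 | m] := by
    intro i hi
    have hcross : ∀ j ∈ s, ∀ᵐ ω ∂μ, j ≠ i → μ[X i * X j | m] ω = 0 := by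
      intro j hj
      by_cases hji : j = i
      · exact .of_forall fun _ h => absurd hji h
      · filter_upwards [horth i hi j hj (Ne.symm hji)] with ω hω _ using hω
    filter_upwards [condExp_finsetSum (hint i hi) m, (eventually_all_finset s).2 hcross]
      with ω hsum hcross
    rw [hsum, Finset.sum_apply, Finset.sum_eq_single_of_mem i hi hcross, sq]
  rw [sq, Finset.sum_mul_sum]
  filter_upwards [condExp_finsetSum (fun i hi => integrable_finsetSum' s (hint i hi)) m,
    (eventually_all_finset s).2 hdiag] with ω hsum hdiag
  rw [hsum, Finset.sum_apply, Finset.sum_apply]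
  exact Finset.sum_congr rfl hdiag

lemma condVar_ae_le_mul_condExp_abs [IsFiniteMeasure μ] (hm : m ≤ mΩ) {W : Ω → ℝ}
    (hW : AEStronglyMeasurable W μ) {c : ℝ} (hWc : ∀ᵐ ω ∂μ, |W ω| ≤ c) :
    Var[W; μ | m] ≤ᵐ[μ] c • μ[fun ω => |W ω| | m] := by
  have hW2 : MemLp W 2 μ := .of_bound hW c hWc
  have hsq : (fun ω => W ω ^ 2) ≤ᵐ[μ] c • fun ω => |W ω| := by
    filter_upwards [hWc] with ω hω
    rw [← sq_abs, sq]
    exact mul_le_mul_of_nonneg_right hω (abs_nonneg _)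
  filter_upwards [condVar_ae_le_condExp_sq hm hW2,
    condExp_mono (m := m) hW2.integrable_sq ((hW2.integrable one_le_two).abs.smul c) hsq,
    condExp_smul (μ := μ) c (fun ω => |W ω|) m] with ω hvar hmono hsmul
  exact hvar.trans (hmono.trans hsmul.le)

lemma measure_ge_inter_le_of_condExp_le [IsProbabilityMeasure μ] (hm : m ≤ mΩ) {Y : Ω → ℝ}
    (hY0 : 0 ≤ᵐ[μ] Y) (hY : Integrable Y μ) {G : Set Ω} (hG : MeasurableSet[m] G)
    {b c : ℝ} (hb : 0 ≤ b) (hc : 0 < c) (hYG : ∀ᵐ ω ∂μ, ω ∈ G → μ[Y | m] ω ≤ b) :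
    μ ({ω | c ≤ Y ω} ∩ G) ≤ ENNReal.ofReal (b / c) := by
  have hGΩ : MeasurableSet G := hm G hG
  have hmarkov : c * μ.real ({ω | c ≤ Y ω} ∩ G) ≤ ∫ ω in G, Y ω ∂μ := by
    rw [measureReal_def, ← Measure.restrict_apply' hGΩ]
    exact mul_meas_ge_le_integral_of_nonneg (ae_restrict_of_ae hY0) hY.restrict c
  have hcond : ∫ ω in G, Y ω ∂μ ≤ b := calc
    ∫ ω in G, Y ω ∂μ = ∫ ω in G, μ[Y | m] ω ∂μ := (setIntegral_condExp hm hY hG).symm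
    _ ≤ ∫ _ in G, b ∂μ := setIntegral_mono_on_ae integrable_condExp.integrableOn
        (integrableOn_const (measure_ne_top μ G)) hGΩ hYG
    _ = μ.real G * b := by rw [setIntegral_const, smul_eq_mul]
    _ ≤ b := mul_le_of_le_one_left hb measureReal_le_one
  rw [ENNReal.le_ofReal_iff_toReal_le (measure_ne_top μ _) (div_nonneg hb hc.le),
    le_div_iff₀ hc, mul_comm]
  exact hmarkov.trans hcond

lemma measure_sum_ge_inter_sum_condExp_le [IsProbabilityMeasure μ] (hm : m ≤ mΩ) {ι : Type*}
    {s : Finset ι} {L : ι → Ω → ℝ} (hL0 : ∀ i ω, 0 ≤ L i ω) (hL : ∀ i, Integrable (L i) μ)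
    {b c : ℝ} (hb : 0 ≤ b) (hc : 0 < c) :
    μ ({ω | c ≤ ∑ i ∈ s, L i ω} ∩ {ω | ∑ i ∈ s, μ[L i | m] ω ≤ b}) ≤ ENNReal.ofReal (b / c) := by
  have hT : StronglyMeasurable[m] fun ω => ∑ i ∈ s, μ[L i | m] ω :=
    Finset.stronglyMeasurable_fun_sum s fun i _ => stronglyMeasurable_condExp
  have hY0 : 0 ≤ᵐ[μ] ∑ i ∈ s, L i := .of_forall fun ω => by
    simpa only [Pi.zero_apply, Finset.sum_apply] using Finset.sum_nonneg fun i _ => hL0 i ω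
  have := measure_ge_inter_le_of_condExp_le (G := {ω | ∑ i ∈ s, μ[L i | m] ω ≤ b}) hm hY0
    (integrable_finsetSum' s fun i _ => hL i) (hT.measurable measurableSet_Iic) hb hc (by
      filter_upwards [condExp_finsetSum (fun i _ => hL i) m] with ω hω hωb
      rwa [hω, Finset.sum_apply])
  simpa only [Finset.sum_apply] using this

lemma measure_abs_sum_sub_condExp_ge_inter_le [StandardBorelSpace Ω] [IsProbabilityMeasure μ]
    (hm : m ≤ mΩ) {ι : Type*} {s : Finset ι} {W : ι → Ω → ℝ} (hW : ∀ i, Measurable (W i))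
    {η : ℝ} (hη : 0 ≤ η) (hWη : ∀ i, ∀ᵐ ω ∂μ, |W i ω| ≤ η)
    (hindep : ∀ i ∈ s, ∀ j ∈ s, i ≠ j → CondIndepFun m hm (W i) (W j) μ)
    {c K : ℝ} (hc : 0 < c) (hK : 0 ≤ K) :
    μ ({ω | c ≤ |∑ i ∈ s, (W i ω - μ[W i | m] ω)|}
        ∩ {ω | ∑ i ∈ s, μ[fun ω' => |W i ω'| | m] ω ≤ K})
      ≤ ENNReal.ofReal (η * K / c ^ 2) := by
  set X : ι → Ω → ℝ := fun i => W i - μ[W i | m]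
  have hXη : ∀ i, ∀ᵐ ω ∂μ, ‖X i ω‖ ≤ 2 * η := fun i => by
    filter_upwards [hWη i, ae_bdd_abs_condExp_of_ae_bdd_abs (m := m) (hWη i)] with ω hW hF
    exact (abs_sub _ _).trans (by linarith)
  have hXi : ∀ i, Integrable (X i) μ := fun i =>
    (Integrable.of_bound (hW i).aestronglyMeasurable η (hWη i)).sub integrable_condExp
  have hXX : ∀ i ∈ s, ∀ j ∈ s, Integrable (X i * X j) μ := fun i _ j _ =>
    (hXi j).bdd_mul (hXi i).1 (hXη i)
  have horth : ∀ i ∈ s, ∀ j ∈ s, i ≠ j → μ[X i * X j | m] =ᵐ[μ] 0 := fun i hi j hj hij =>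
    (hindep i hi j hj hij).condExp_mul_sub_condExp_ae_eq_zero hm (hW i) (hW j) (hWη i) (hWη j)
  have hvar : ∀ i ∈ s, ∀ᵐ ω ∂μ, μ[X i ^ 2 | m] ω ≤ η * μ[fun ω' => |W i ω'| | m] ω :=
    fun i _ => condVar_ae_le_mul_condExp_abs hm (hW i).aestronglyMeasurable (hWη i)
  have hR : StronglyMeasurable[m] fun ω => ∑ i ∈ s, μ[fun ω' => |W i ω'| | m] ω :=
    Finset.stronglyMeasurable_fun_sum s fun i _ => stronglyMeasurable_condExp
  have hG : MeasurableSet[m] {ω | ∑ i ∈ s, μ[fun ω' => |W i ω'| | m] ω ≤ K} :=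
    hR.measurable measurableSet_Iic
  have hsq : {ω | c ≤ |∑ i ∈ s, (W i ω - μ[W i | m] ω)|}
      ⊆ {ω | c ^ 2 ≤ ((∑ i ∈ s, X i) ^ 2) ω} := by
    intro ω hω
    simp only [Set.mem_ofPred_eq, Pi.pow_apply, Finset.sum_apply, Pi.sub_apply, X] at hω ⊢
    simpa only [sq_abs] using pow_le_pow_left₀ hc.le hω 2
  refine (measure_mono (Set.inter_subset_inter_left _ hsq)).trans
    (measure_ge_inter_le_of_condExp_le hm (.of_forall fun ω => sq_nonneg _) ?_ hG
      (mul_nonneg hη hK) (pow_pos hc 2) ?_)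
  · have hX2 : MemLp (∑ i ∈ s, X i) 2 μ :=
      memLp_finsetSum' s fun i _ => MemLp.of_bound (hXi i).1 (2 * η) (hXη i)
    exact hX2.integrable_sq
  · filter_upwards [condExp_sq_sum_ae_eq_sum_condExp_sq hXX horth, (eventually_all_finset s).2 hvar]
      with ω hsum hvar hωG
    calc μ[(∑ i ∈ s, X i) ^ 2 | m] ω = ∑ i ∈ s, μ[X i ^ 2 | m] ω := by
          rw [hsum, Finset.sum_apply]
      _ ≤ ∑ i ∈ s, η * μ[fun ω' => |W i ω'| | m] ω := Finset.sum_le_sum hvar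
      _ ≤ η * K := by rw [← Finset.mul_sum]; exact mul_le_mul_of_nonneg_left hωG hη

-- Only an inequality: `truncation f A` keeps the value `f ω = A`.
lemma abs_sub_truncation_le_mul_indicator (f : Ω → ℝ) (A : ℝ) (ω : Ω) :
    |f ω - truncation f A ω| ≤ |f ω| * Set.indicator {ω' | A ≤ |f ω'|} 1 ω := by
  by_cases hf : f ω ∈ Set.Ioc (-A) A
  · simp only [truncation, Function.comp_apply, Set.indicator_of_mem hf, id, sub_self, abs_zero]
    exact mul_nonneg (abs_nonneg _) (Set.indicator_nonneg (fun _ _ => zero_le_one) _)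
  · have hA : A ≤ |f ω| := by
      simp only [Set.mem_Ioc, not_and_or, not_lt, not_le] at hf
      rcases hf with hf | hf
      · exact le_abs.2 (Or.inr (by linarith))
      · exact le_abs.2 (Or.inl hf.le)
    simp [truncation, Set.indicator_of_notMem hf, hA]

lemma integrable_abs_mul_indicator_abs_ge {f : Ω → ℝ} (hf : Measurable f) (hfi : Integrable f μ)
    (A : ℝ) : Integrable (fun ω => |f ω| * Set.indicator {ω' | A ≤ |f ω'|} 1 ω) μ := by
  refine hfi.abs.mono' (hf.abs.mul (measurable_const.indicator
    (measurableSet_le measurable_const hf.abs))).aestronglyMeasurable (.of_forall fun ω => ?_)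
  simp only [Set.indicator_apply]
  split_ifs <;> simp

lemma ae_abs_sum_sub_condExp_le {ι : Type*} {s : Finset ι} {V W L : ι → Ω → ℝ}
    (hV : ∀ i, Integrable (V i) μ) (hW : ∀ i, Integrable (W i) μ) (hL : ∀ i, Integrable (L i) μ)
    (hVWL : ∀ i ω, |V i ω - W i ω| ≤ L i ω) :
    ∀ᵐ ω ∂μ, |∑ i ∈ s, (V i ω - μ[V i | m] ω)|
      ≤ ∑ i ∈ s, L i ω + ∑ i ∈ s, μ[L i | m] ω + |∑ i ∈ s, (W i ω - μ[W i | m] ω)| := by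
  have hsplit : ∀ i ∈ s, ∀ᵐ ω ∂μ, μ[V i | m] ω = μ[V i - W i | m] ω + μ[W i | m] ω
      ∧ |μ[V i - W i | m] ω| ≤ μ[L i | m] ω := fun i _ => by
    filter_upwards [condExp_sub (hV i) (hW i) m, abs_condExp_ae_le_condExp_abs (m := m) (V i - W i),
      condExp_mono (m := m) ((hV i).sub (hW i)).abs (hL i) (.of_forall (hVWL i))]
      with ω hsub habs hmono
    exact ⟨by rw [hsub, Pi.sub_apply]; ring, habs.trans hmono⟩
  filter_upwards [(eventually_all_finset s).2 hsplit] with ω hω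
  calc |∑ i ∈ s, (V i ω - μ[V i | m] ω)|
      = |∑ i ∈ s, (V i ω - W i ω - μ[V i - W i | m] ω) + ∑ i ∈ s, (W i ω - μ[W i | m] ω)| := by
        rw [← Finset.sum_add_distrib]
        congr 1
        refine Finset.sum_congr rfl fun i hi => ?_
        rw [(hω i hi).1]
        ring
    _ ≤ ∑ i ∈ s, |V i ω - W i ω - μ[V i - W i | m] ω| + |∑ i ∈ s, (W i ω - μ[W i | m] ω)| :=
        (abs_add_le _ _).trans (add_le_add_left (Finset.abs_sum_le_sum_abs _ _) _)
    _ ≤ ∑ i ∈ s, (L i ω + μ[L i | m] ω) + |∑ i ∈ s, (W i ω - μ[W i | m] ω)| := by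
        gcongr with i hi
        exact (abs_sub _ _).trans (add_le_add (hVWL i ω) (hω i hi).2)
    _ = _ := by rw [Finset.sum_add_distrib]

theorem measure_abs_sum_sub_condExp_ge_le [StandardBorelSpace Ω] [IsProbabilityMeasure μ]
    (hm : m ≤ mΩ) {ι : Type*} {s : Finset ι} {V : ι → Ω → ℝ} (hV : ∀ i, Measurable (V i))
    (hVi : ∀ i, Integrable (V i) μ)
    (hindep : ∀ i ∈ s, ∀ j ∈ s, i ≠ j → CondIndepFun m hm (V i) (V j) μ)
    (η : ℝ) {b c₁ c₂ K : ℝ} (hb : 0 ≤ b) (hc₁ : 0 < c₁) (hc₂ : 0 < c₂) (hK : 0 ≤ K) :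
    μ {ω | c₁ + b + c₂ ≤ |∑ i ∈ s, (V i ω - μ[V i | m] ω)|}
      ≤ μ {ω | b < ∑ i ∈ s,
            μ[fun ω' => |V i ω'| * Set.indicator {ω'' | η ≤ |V i ω''|} 1 ω' | m] ω}
        + ENNReal.ofReal (b / c₁) + ENNReal.ofReal (|η| * K / c₂ ^ 2)
        + μ {ω | K < ∑ i ∈ s, μ[fun ω' => |V i ω'| | m] ω} := by
  set W : ι → Ω → ℝ := fun i => truncation (V i) η
  set L : ι → Ω → ℝ := fun i ω => |V i ω| * Set.indicator {ω' | η ≤ |V i ω'|} 1 ω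
  have hφ : Measurable (Set.indicator (Set.Ioc (-η) η) id : ℝ → ℝ) :=
    measurable_id.indicator measurableSet_Ioc
  have hW : ∀ i, Measurable (W i) := fun i => hφ.comp (hV i)
  have hWη : ∀ i, ∀ᵐ ω ∂μ, |W i ω| ≤ |η| := fun i => .of_forall (abs_truncation_le_bound _ _)
  have hWi : ∀ i, Integrable (W i) μ := fun i => .of_bound (hW i).aestronglyMeasurable _ (hWη i)
  have hLi : ∀ i, Integrable (L i) μ := fun i =>
    integrable_abs_mul_indicator_abs_ge (hV i) (hVi i) η
  have hWV : ∀ᵐ ω ∂μ, ∑ i ∈ s, μ[fun ω' => |W i ω'| | m] ω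
      ≤ ∑ i ∈ s, μ[fun ω' => |V i ω'| | m] ω := by
    filter_upwards [(eventually_all_finset s).2 fun i _ => condExp_mono (m := m) (hWi i).abs
      (hVi i).abs (.of_forall (abs_truncation_le_abs_self (V i) η))] with ω hω
    exact Finset.sum_le_sum hω
  have hmarkov := measure_sum_ge_inter_sum_condExp_le hm (s := s)
    (fun i ω => mul_nonneg (abs_nonneg _) (Set.indicator_nonneg (fun _ _ => zero_le_one) _))
    hLi hb hc₁
  have hcheb := measure_abs_sum_sub_condExp_ge_inter_le hm hW (abs_nonneg η) hWη
    (fun i hi j hj hij => (hindep i hi j hj hij).comp hφ hφ) hc₂ hK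
  calc μ {ω | c₁ + b + c₂ ≤ |∑ i ∈ s, (V i ω - μ[V i | m] ω)|}
      ≤ μ ({ω | b < ∑ i ∈ s, μ[L i | m] ω}
          ∪ ({ω | c₁ ≤ ∑ i ∈ s, L i ω} ∩ {ω | ∑ i ∈ s, μ[L i | m] ω ≤ b})
          ∪ ({ω | c₂ ≤ |∑ i ∈ s, (W i ω - μ[W i | m] ω)|}
            ∩ {ω | ∑ i ∈ s, μ[fun ω' => |W i ω'| | m] ω ≤ K})
          ∪ {ω | K < ∑ i ∈ s, μ[fun ω' => |V i ω'| | m] ω}) := by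
        refine measure_mono_ae ?_
        filter_upwards [ae_abs_sum_sub_condExp_le (s := s) (m := m) hVi hWi hLi
          (fun i => abs_sub_truncation_le_mul_indicator (V i) η), hWV] with ω hdec hWVω hω
        change c₁ + b + c₂ ≤ _ at hω
        show ω ∈ (_ : Set Ω)
        simp only [Set.mem_union, Set.mem_inter_iff, Set.mem_ofPred_eq]
        by_contra! h
        obtain ⟨⟨⟨hT, hL⟩, hW⟩, hR⟩ := h
        have hL' := lt_of_not_ge fun h => (hL h).not_ge hT
        have hW' := lt_of_not_ge fun h => (hW h).not_ge (hWVω.trans hR)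
        linarith
    _ ≤ _ := (measure_union_le _ _).trans (add_le_add ((measure_union_le _ _).trans
          (add_le_add ((measure_union_le _ _).trans (add_le_add le_rfl hmarkov)) hcheb)) le_rfl)

theorem measure_abs_sum_sub_condExp_ge_le' [StandardBorelSpace Ω] [IsProbabilityMeasure μ]
    (hm : m ≤ mΩ) {ι : Type*} {s : Finset ι} {V : ι → Ω → ℝ} (hV : ∀ i, Measurable (V i))
    (hVi : ∀ i, Integrable (V i) μ)
    (hindep : ∀ i ∈ s, ∀ j ∈ s, i ≠ j → CondIndepFun m hm (V i) (V j) μ)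
    {a δ K : ℝ} (ha : 0 < a) (hδ : 0 < δ) (hK : 0 ≤ K) :
    μ {ω | a ≤ |∑ i ∈ s, (V i ω - μ[V i | m] ω)|}
      ≤ μ {ω | a / 3 * min δ 1 < ∑ i ∈ s, μ[fun ω' => |V i ω'|
            * Set.indicator {ω'' | δ * (a / 3) ^ 2 / (K + 1) ≤ |V i ω''|} 1 ω' | m] ω}
        + 2 * ENNReal.ofReal δ + μ {ω | K < ∑ i ∈ s, μ[fun ω' => |V i ω'| | m] ω} := by
  set c := a / 3
  -- makes the Chebyshev term `|η| * K / c ^ 2` equal to `δ * K / (K + 1) ≤ δ`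
  set η := δ * c ^ 2 / (K + 1)
  have hc : 0 < c := by positivity
  have hbc : c * min δ 1 ≤ c := mul_le_of_le_one_right hc.le (min_le_right _ _)
  calc μ {ω | a ≤ |∑ i ∈ s, (V i ω - μ[V i | m] ω)|}
      ≤ μ {ω | c + c * min δ 1 + c ≤ |∑ i ∈ s, (V i ω - μ[V i | m] ω)|} :=
        measure_mono fun ω (hω : a ≤ _) => le_trans (by linarith [show c = a / 3 from rfl]) hω
    _ ≤ _ := measure_abs_sum_sub_condExp_ge_le hm hV hVi hindep η (by positivity) hc hc hK
    _ ≤ _ := by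
        rw [two_mul, ← add_assoc]
        gcongr
        · rw [mul_div_cancel_left₀ _ hc.ne']
          exact min_le_left _ _
        · rw [abs_of_pos (by positivity), div_le_iff₀ (by positivity), div_mul_eq_mul_div,
            div_le_iff₀ (by positivity)]
          nlinarith [mul_nonneg hδ.le (sq_nonneg c)]

end ProbabilityTheory

theorem conditional_wlln_triangular_array_general
    {Ω : Type*} [m : MeasurableSpace Ω] [StandardBorelSpace Ω]
    (μ : Measure Ω) [IsProbabilityMeasure μ]
    (M : ℕ → ℕ) (V : ℕ → ℕ → Ω → ℝ)
    (𝔉 : ℕ → MeasurableSpace Ω) (h𝔉 : ∀ N, 𝔉 N ≤ m)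
    (hmeas : ∀ N j, Measurable (V N j))
    -- (1) conditional independence given 𝔉 N and conditional integrability
    (hindep : ∀ N, iCondIndepFun (𝔉 N) (h𝔉 N)
      (m := fun _ : Fin (M N) => (inferInstance : MeasurableSpace ℝ))
      (fun j : Fin (M N) => V N j) μ)
    (hint : ∀ N j, Integrable (V N j) μ)
    -- (2) the row sums of conditional absolute expectations are bounded in probability
    (hbdd : ∀ δ : ℝ, 0 < δ → ∃ K : ℝ, ∀ N,
      μ {ω | K < ∑ j ∈ range (M N), (μ[fun ω' => |V N j ω'| | 𝔉 N]) ω}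
        < ENNReal.ofReal δ)
    -- (3) conditional uniform integrability (Lindeberg-type condition)
    (hunif : ∀ ε : ℝ, 0 < ε → TendstoInMeasure μ
      (fun N ω => ∑ j ∈ range (M N),
        (μ[fun ω' => |V N j ω'| * Set.indicator {ω'' | ε ≤ |V N j ω''|} 1 ω' | 𝔉 N]) ω)
      atTop (fun _ => (0 : ℝ))) :
    TendstoInMeasure μ
      (fun N ω => ∑ j ∈ range (M N), (V N j ω - (μ[V N j | 𝔉 N]) ω))
      atTop (fun _ => (0 : ℝ)) := by
  rw [tendstoInMeasure_iff_dist]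
  intro a ha
  rw [ENNReal.tendsto_nhds_zero]
  intro ε hε
  obtain ⟨δ, hδ, hδε⟩ := ENNReal.exists_nnreal_pos_mul_lt (ENNReal.ofNat_ne_top (n := 4)) hε.ne'
  obtain ⟨K, hK⟩ := hbdd δ hδ
  have hunifδ := tendstoInMeasure_iff_dist.1 (hunif (δ * (a / 3) ^ 2 / (max K 0 + 1))
    (by positivity)) (a / 3 * min (δ : ℝ) 1) (by positivity)
  filter_upwards [hunifδ.eventually (ge_mem_nhds (ENNReal.ofReal_pos.2 hδ))] with N hN
  have hpair : ∀ i ∈ range (M N), ∀ j ∈ range (M N), i ≠ j →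
      CondIndepFun (𝔉 N) (h𝔉 N) (V N i) (V N j) μ := fun i hi j hj hij =>
    (hindep N).condIndepFun (i := ⟨i, mem_range.1 hi⟩) (j := ⟨j, mem_range.1 hj⟩) (by simp [hij])
  calc μ {ω | a ≤ dist (∑ j ∈ range (M N), (V N j ω - (μ[V N j | 𝔉 N]) ω)) 0}
      ≤ _ := by
        simpa only [Real.dist_eq, sub_zero] using measure_abs_sum_sub_condExp_ge_le' (h𝔉 N)
          (hmeas N) (hint N) hpair ha (NNReal.coe_pos.2 hδ) (le_max_right K 0)
    _ ≤ ENNReal.ofReal δ + 2 * ENNReal.ofReal δ + ENNReal.ofReal δ := by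
        gcongr
        · refine (measure_mono fun ω (hω : (_ : ℝ) < _) => ?_).trans hN
          exact hω.le.trans ((le_abs_self _).trans_eq (by rw [Real.dist_eq, sub_zero]))
        · exact (measure_mono fun ω (hω : max K 0 < _) => (le_max_left K 0).trans_lt hω).trans
            (hK N).le
    _ ≤ ε := by
        rw [ENNReal.ofReal_coe_nnreal]
        calc _ = (δ : ENNReal) * 4 := by ring
          _ ≤ ε := hδε.le

/-- Conditional weak law of large numbers for triangular arrays
(Proposition 9.5.7 of Cappé–Moulines–Rydén). -/
theorem conditional_wlln_triangular_array
    {Ω : Type*} [m : MeasurableSpace Ω] [StandardBorelSpace Ω] [Nonempty Ω]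
    (μ : Measure Ω) [IsProbabilityMeasure μ]
    (M : ℕ → ℕ) (V : ℕ → ℕ → Ω → ℝ)
    (𝔉 : ℕ → MeasurableSpace Ω) (h𝔉 : ∀ N, 𝔉 N ≤ m)
    (hmeas : ∀ N j, Measurable (V N j))
    -- (1) conditional independence given 𝔉 N and conditional integrability
    (hindep : ∀ N, iCondIndepFun (𝔉 N) (h𝔉 N)
      (m := fun _ : Fin (M N) => (inferInstance : MeasurableSpace ℝ))
      (fun j : Fin (M N) => V N j) μ)
    (hint : ∀ N j, Integrable (V N j) μ)
    -- (2) the row sums of conditional absolute expectations are bounded in probability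
    (hbdd : ∀ δ : ℝ, 0 < δ → ∃ K : ℝ, ∀ N,
      μ {ω | K < ∑ j ∈ range (M N), (μ[fun ω' => |V N j ω'| | 𝔉 N]) ω}
        < ENNReal.ofReal δ)
    -- (3) conditional uniform integrability (Lindeberg-type condition)
    (hunif : ∀ ε : ℝ, 0 < ε → TendstoInMeasure μ
      (fun N ω => ∑ j ∈ range (M N),
        (μ[fun ω' => |V N j ω'| * Set.indicator {ω'' | ε ≤ |V N j ω''|} 1 ω' | 𝔉 N]) ω)
      atTop (fun _ => (0 : ℝ))) :
    TendstoInMeasure μ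
      (fun N ω => ∑ j ∈ range (M N), (V N j ω - (μ[V N j | 𝔉 N]) ω))
      atTop (fun _ => (0 : ℝ)) :=
  conditional_wlln_triangular_array_general (m := m) μ M V 𝔉 h𝔉 hmeas hindep hint hbdd hunif
end

section
/- Let (Θ, 𝒯) be a measurable space with probability measures π and ρ satisfying π ≪ ρ, and suppose there is a version of the Radon–Nikodym derivative dπ/dρ bounded above by a constant C < ∞. Let φ : Θ → ℝ be measurable with φ ∈ L¹(Θ, π), let θ¹, θ², ... be i.i.d. samples from ρ, and for each N and each i ≤ N let φ̂_{N,i} be random variables such that sup_{θ∈Θ}-style uniform error e_N := sup_i |φ̂_{N,i} − φ(θ^i)| → 0 in probability as N_X → ∞ uniformly in N. Then N^{-1} Σ_{i=1}^N (dπ/dρ)(θ^i) φ̂_{N,i} → ∫_Θ φ dπ in probability as N, N_X → ∞. -/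
/-!
Writing `φ̂` for the approximate evaluations, the estimator differs from the exact
importance-sampling average `N⁻¹ ∑ w(θⁱ) φ(θⁱ)` by at most `C · e`, where
`e = maxᵢ |φ̂ᵢ - φ(θⁱ)|`, because the weights lie in `[0, C]`. Since `π = w · ρ`, the terms
`w(θⁱ) φ(θⁱ)` are i.i.d. and integrable with mean `∫ φ dπ`, so by the strong law the exact
average converges to it. By hypothesis `e → 0` in probability, hence so does the difference.
-/

open MeasureTheory ProbabilityTheory Filter Finset

section ImportanceSampling

variable {Θ : Type*} [MeasurableSpace Θ] {ρ : Measure Θ} {w : Θ → ℝ}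

lemma integrable_withDensity_ofReal_iff (hw : Measurable w) (hw0 : ∀ θ, 0 ≤ w θ)
    {φ : Θ → ℝ} :
    Integrable φ (ρ.withDensity fun θ => ENNReal.ofReal (w θ)) ↔
      Integrable (fun θ => w θ * φ θ) ρ := by
  rw [integrable_withDensity_iff_integrable_smul' hw.ennreal_ofReal
    (ae_of_all _ fun _ => ENNReal.ofReal_lt_top)]
  simp only [ENNReal.toReal_ofReal (hw0 _), smul_eq_mul]

lemma integral_withDensity_ofReal (hw : Measurable w) (hw0 : ∀ θ, 0 ≤ w θ) (φ : Θ → ℝ) :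
    ∫ θ, φ θ ∂ρ.withDensity (fun θ => ENNReal.ofReal (w θ)) = ∫ θ, w θ * φ θ ∂ρ := by
  rw [integral_withDensity_eq_integral_toReal_smul hw.ennreal_ofReal
    (ae_of_all _ fun _ => ENNReal.ofReal_lt_top)]
  simp only [ENNReal.toReal_ofReal (hw0 _), smul_eq_mul]

end ImportanceSampling

theorem tendstoInMeasure_average_of_iIndepFun {Ω Θ : Type*} [MeasurableSpace Ω]
    [MeasurableSpace Θ] {μ : Measure Ω} [IsFiniteMeasure μ] {ρ : Measure Θ} {θs : ℕ → Ω → Θ}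
    (hθ : ∀ i, Measurable (θs i)) (hiid : iIndepFun θs μ) (hlaw : ∀ i, μ.map (θs i) = ρ)
    {g : Θ → ℝ} (hg : Integrable g ρ) :
    TendstoInMeasure μ (fun (N : ℕ) ω => (N : ℝ)⁻¹ * ∑ i ∈ range N, g (θs i ω)) atTop
      (fun _ => ∫ θ, g θ ∂ρ) := by
  have hg_map : ∀ i, AEStronglyMeasurable g (μ.map (θs i)) := fun i => hlaw i ▸ hg.1
  have hident : ∀ i, IdentDistrib (g ∘ θs i) (g ∘ θs 0) μ μ := fun i =>
    (IdentDistrib.mk (hθ i).aemeasurable (hθ 0).aemeasurable (by rw [hlaw, hlaw])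
      ).comp_of_aemeasurable (hg_map i).aemeasurable
  have hindep : Pairwise fun i j => (g ∘ θs i) ⟂ᵢ[μ] (g ∘ θs j) := fun i j hij =>
    (hiid.indepFun hij).comp₀ (hθ i).aemeasurable (hθ j).aemeasurable (hg_map i).aemeasurable
      (hg_map j).aemeasurable
  have hint : Integrable (g ∘ θs 0) μ :=
    (integrable_map_measure (hg_map 0) (hθ 0).aemeasurable).mp (hlaw 0 ▸ hg)
  have hmean : μ[g ∘ θs 0] = ∫ θ, g θ ∂ρ := by
    rw [← hlaw 0, integral_map (hθ 0).aemeasurable (hg_map 0)]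
    rfl
  have hslln := strong_law_ae (fun i => g ∘ θs i) hint hindep hident
  rw [hmean] at hslln
  refine tendstoInMeasure_of_tendsto_ae (fun N => ?_)
    (by simpa only [smul_eq_mul, Function.comp_apply] using hslln)
  exact (Finset.aestronglyMeasurable_fun_sum _ fun i _ =>
    (hident i).aemeasurable_fst.aestronglyMeasurable).const_mul _

lemma Finset.le_ciSup_of_mem {ι α : Type*} [ConditionallyCompleteLattice α] {s : Finset ι}
    {f : ι → α} {i : ι} (hi : i ∈ s) :
    f i ≤ ⨆ j ∈ s, f j := by
  refine le_ciSup₂ (f := fun j (_ : j ∈ s) => f j)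
    ((s.finite_toSet.image f).bddAbove.mono ?_) i hi
  intro x hx
  simp only [Set.mem_iUnion, Set.mem_range] at hx
  obtain ⟨j, hj, rfl⟩ := hx
  exact ⟨j, hj, rfl⟩

lemma abs_average_mul_sub_le {w a b : ℕ → ℝ} {C : ℝ} (hw0 : ∀ i, 0 ≤ w i)
    (hwC : ∀ i, w i ≤ C) (N : ℕ) :
    |(N : ℝ)⁻¹ * ∑ i ∈ range N, w i * a i - (N : ℝ)⁻¹ * ∑ i ∈ range N, w i * b i| ≤
      C * ⨆ i ∈ range N, |a i - b i| := by
  rcases N.eq_zero_or_pos with rfl | hN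
  · simp
  set e := ⨆ i ∈ range N, |a i - b i|
  have he : ∀ i ∈ range N, |a i - b i| ≤ e := fun i hi =>
    Finset.le_ciSup_of_mem (f := fun i => |a i - b i|) hi
  calc |(N : ℝ)⁻¹ * ∑ i ∈ range N, w i * a i - (N : ℝ)⁻¹ * ∑ i ∈ range N, w i * b i|
      = (N : ℝ)⁻¹ * |∑ i ∈ range N, w i * (a i - b i)| := by
        rw [← mul_sub, ← sum_sub_distrib, abs_mul, abs_of_pos (by positivity)]
        simp only [mul_sub]
    _ ≤ (N : ℝ)⁻¹ * ∑ _i ∈ range N, C * e := by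
        gcongr
        refine (abs_sum_le_sum_abs _ _).trans (sum_le_sum fun i hi => ?_)
        rw [abs_mul, abs_of_nonneg (hw0 i)]
        exact mul_le_mul (hwC i) (he i hi) (abs_nonneg _) ((hw0 i).trans (hwC i))
    _ = C * e := by
        rw [sum_const, card_range, nsmul_eq_mul, ← mul_assoc, inv_mul_cancel₀ (by positivity),
          one_mul]

section ConvergenceInMeasure

variable {α ι E : Type*} [MeasurableSpace α] {μ : Measure α}

lemma tendstoInMeasure_prod_atTop_of_uniform {F : ℕ → ℕ → α → ℝ} (hF0 : ∀ m n x, 0 ≤ F m n x)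
    (hF : ∀ ε δ : ℝ, 0 < ε → 0 < δ → ∃ m₀ : ℕ, ∀ m ≥ m₀, ∀ n : ℕ,
      μ {x | ε ≤ F m n x} < ENNReal.ofReal δ) {l : Filter ℕ} :
    TendstoInMeasure μ (fun p : ℕ × ℕ => F p.2 p.1) (l ×ˢ atTop) 0 := by
  rw [tendstoInMeasure_iff_dist]
  intro ε hε
  rw [ENNReal.tendsto_nhds_zero]
  intro δ hδ
  obtain ⟨r, -, hr, hrδ⟩ := ENNReal.lt_iff_exists_real_btwn.mp hδ
  obtain ⟨m₀, hm₀⟩ := hF ε r hε (ENNReal.ofReal_pos.mp hr)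
  filter_upwards [tendsto_snd.eventually (eventually_ge_atTop m₀)] with p hp
  simp only [Pi.zero_apply, Real.dist_0_eq_abs, abs_of_nonneg (hF0 _ _ _)]
  exact ((hm₀ p.2 hp p.1).trans hrδ).le

lemma TendstoInMeasure.of_dist_le_mul [PseudoMetricSpace E] {l : Filter ι} {f g : ι → α → E}
    {c : α → E} {h : ι → α → ℝ} {K : ℝ} (hg : TendstoInMeasure μ g l c)
    (hh : TendstoInMeasure μ h l 0) (hfg : ∀ i x, dist (f i x) (g i x) ≤ K * h i x) :
    TendstoInMeasure μ f l c := by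
  rw [tendstoInMeasure_iff_dist] at hg hh ⊢
  intro ε hε
  set t := ε / (2 * (|K| + 1))
  have ht : 0 < t := by positivity
  have hKt : |K| * t < ε / 2 := by
    rw [mul_div_assoc', div_lt_div_iff₀ (by positivity) two_pos]
    nlinarith [abs_nonneg K]
  have hsub : ∀ i, {x | ε ≤ dist (f i x) (c x)} ⊆
      {x | ε / 2 ≤ dist (g i x) (c x)} ∪ {x | t ≤ dist (h i x) 0} := by
    intro i x hx
    by_contra hx'
    simp only [Set.mem_union, Set.mem_ofPred_eq, not_or, not_le, Real.dist_0_eq_abs] at hx hx'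
    have hKh : K * h i x < ε / 2 :=
      calc K * h i x ≤ |K| * |h i x| := (le_abs_self _).trans (abs_mul _ _).le
        _ ≤ |K| * t := by gcongr; exact hx'.2.le
        _ < ε / 2 := hKt
    linarith [dist_triangle (f i x) (g i x) (c x), hfg i x]
  refine tendsto_of_tendsto_of_tendsto_of_le_of_le tendsto_const_nhds
    (by simpa using (hg (ε / 2) (by positivity)).add (hh t ht)) (fun _ => zero_le)
    fun i => (measure_mono (hsub i)).trans (measure_union_le _ _)

end ConvergenceInMeasure

theorem particle_swarm_consistency_general
    {Ω : Type*} [MeasurableSpace Ω] (μ : Measure Ω) [IsProbabilityMeasure μ]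
    {Θ : Type*} [MeasurableSpace Θ]
    (π ρ : Measure Θ)
    -- a version `w` of the Radon–Nikodym derivative dπ/dρ, bounded by C
    (w : Θ → ℝ) (hw_meas : Measurable w) (hw_nonneg : ∀ θ, 0 ≤ w θ)
    (hw_density : π = ρ.withDensity (fun θ => ENNReal.ofReal (w θ)))
    (C : ℝ) (hC : ∀ θ, w θ ≤ C)
    (φ : Θ → ℝ) (hφ_int : Integrable φ π)
    -- i.i.d. samples from ρ
    (θs : ℕ → Ω → Θ) (hθ_meas : ∀ i, Measurable (θs i))
    (hiid : iIndepFun θs μ)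
    (hlaw : ∀ i, μ.map (θs i) = ρ)
    -- approximate evaluations, indexed by number of particles NX, number of filters N, filter i
    (est : ℕ → ℕ → ℕ → Ω → ℝ)
    -- uniform (over i and N) convergence in probability of the approximation error
    (hunif : ∀ ε δ : ℝ, 0 < ε → 0 < δ → ∃ NX0 : ℕ, ∀ NX ≥ NX0, ∀ N : ℕ,
      μ {ω | ε ≤ ⨆ i ∈ range N, |est NX N i ω - φ (θs i ω)|} < ENNReal.ofReal δ) :
    TendstoInMeasure μ
      (fun p : ℕ × ℕ => fun ω =>
        (p.1 : ℝ)⁻¹ * ∑ i ∈ range p.1, w (θs i ω) * est p.2 p.1 i ω)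
      (atTop ×ˢ atTop) (fun _ => ∫ θ, φ θ ∂π) := by
  subst hw_density
  have hexact := tendstoInMeasure_average_of_iIndepFun hθ_meas hiid hlaw
    ((integrable_withDensity_ofReal_iff hw_meas hw_nonneg).mp hφ_int)
  rw [← integral_withDensity_ofReal hw_meas hw_nonneg] at hexact
  have herror := tendstoInMeasure_prod_atTop_of_uniform (l := atTop)
    (fun _ _ _ => Real.iSup_nonneg fun _ => Real.iSup_nonneg fun _ => abs_nonneg _) hunif
  exact TendstoInMeasure.of_dist_le_mul (hexact.comp tendsto_fst) herror fun p _ =>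
    abs_average_mul_sub_le (fun _ => hw_nonneg _) (fun _ => hC _) p.1

/-- Consistency of the particle swarm filter: importance-weighted averages of
approximate evaluations converge in probability to `∫ φ dπ` as both the number of
parameter samples and the number of state particles tend to infinity. -/
theorem particle_swarm_consistency
    {Ω : Type*} [MeasurableSpace Ω] (μ : Measure Ω) [IsProbabilityMeasure μ]
    {Θ : Type*} [MeasurableSpace Θ]
    (π ρ : Measure Θ) [IsProbabilityMeasure π] [IsProbabilityMeasure ρ]
    (hac : π ≪ ρ)
    -- a version `w` of the Radon–Nikodym derivative dπ/dρ, bounded by C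
    (w : Θ → ℝ) (hw_meas : Measurable w) (hw_nonneg : ∀ θ, 0 ≤ w θ)
    (hw_density : π = ρ.withDensity (fun θ => ENNReal.ofReal (w θ)))
    (C : ℝ) (hC : ∀ θ, w θ ≤ C)
    (φ : Θ → ℝ) (hφ_meas : Measurable φ) (hφ_int : Integrable φ π)
    -- i.i.d. samples from ρ
    (θs : ℕ → Ω → Θ) (hθ_meas : ∀ i, Measurable (θs i))
    (hiid : iIndepFun θs μ)
    (hlaw : ∀ i, μ.map (θs i) = ρ)
    -- approximate evaluations, indexed by number of particles NX, number of filters N, filter i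
    (est : ℕ → ℕ → ℕ → Ω → ℝ)
    -- uniform (over i and N) convergence in probability of the approximation error
    (hunif : ∀ ε δ : ℝ, 0 < ε → 0 < δ → ∃ NX0 : ℕ, ∀ NX ≥ NX0, ∀ N : ℕ,
      μ {ω | ε ≤ ⨆ i ∈ range N, |est NX N i ω - φ (θs i ω)|} < ENNReal.ofReal δ) :
    TendstoInMeasure μ
      (fun p : ℕ × ℕ => fun ω =>
        (p.1 : ℝ)⁻¹ * ∑ i ∈ range p.1, w (θs i ω) * est p.2 p.1 i ω)
      (atTop ×ˢ atTop) (fun _ => ∫ θ, φ θ ∂π) :=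
  particle_swarm_consistency_general μ π ρ w hw_meas hw_nonneg hw_density C hC φ hφ_int θs hθ_meas
    hiid hlaw est hunif
end
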